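/- Let (I, ν, S, b, g) be an abstract coherent club system and let C : I → Set(Ord) be its associated coherent union. Then for every i ∈ I and every limit point ξ of C(i) with ξ < ν(i), there exists j ∈ I such that ν(j) = ξ and C(j) = ξ ∩ C(i). -/

import Mathlib

open Cardinal Set

/-- `C` is a club subset of `ν`: `C ⊆ ν`, `C` is unbounded in `ν`, and `C` is closed
under suprema of its nonempty bounded subsets. -/
def IsClubIn (C : Set Ordinal.{0}) (ν : Ordinal.{0}) : Prop :=
  C ⊆ Set.Iio ν ∧ (∀ α < ν, ∃ β ∈ C, α ≤ β) ∧
    ∀ s ⊆ C, s.Nonempty → sSup s < ν → sSup s ∈ C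

/-- `ξ` is a limit point of the set of ordinals `C`: `ξ = sup (C ∩ ξ) > 0`. -/
def IsLimitPt (C : Set Ordinal.{0}) (ξ : Ordinal.{0}) : Prop :=
  0 < ξ ∧ ξ = sSup (C ∩ Set.Iio ξ)

/-- The order type of a set of ordinals. -/
noncomputable def otype (C : Set Ordinal.{0}) : Ordinal.{1} :=
  Ordinal.type (α := C) (· < ·)

/-- `lim(Γ)`: the limit points of `Γ` lying in the interval `(κ, κ⁺)`. -/
def sqLim (κ : Cardinal.{0}) (Γ : Set Ordinal.{0}) : Set Ordinal.{0} :=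
  {ν | κ.ord < ν ∧ ν < (Order.succ κ).ord ∧ IsLimitPt Γ ν}

/-- `F` is a witnessing sequence for `□_{κ,<λ}(Γ)`. -/
def IsSquareSeq (κ lam : Cardinal.{0}) (Γ : Set Ordinal.{0})
    (F : Ordinal.{0} → Set (Set Ordinal.{0})) : Prop :=
  ∀ ν ∈ sqLim κ Γ,
    (1 ≤ #(F ν) ∧ #(F ν) < Cardinal.lift.{1} lam) ∧
    ∀ C ∈ F ν,
      C ⊆ Set.Iio ν ∩ Γ ∧ IsClubIn C ν ∧ otype C ≤ Ordinal.lift.{1} κ.ord ∧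
      ∀ ν' < ν, IsLimitPt C ν' → C ∩ Set.Iio ν' ∈ F ν'

/-- The principle `□_{κ,<λ}(Γ)`. -/
def SquareLt (κ lam : Cardinal.{0}) (Γ : Set Ordinal.{0}) : Prop :=
  ∃ F, IsSquareSeq κ lam Γ F

/-- An abstract coherent club system, abstracting the data provided by Lemma 1.19 of
the paper for the sets `S(M,ζ)`: indices `i`, limit ordinals `ν i`, clubs `S i ⊆ ν i`
of order type at most `(b i)⁺`, and for each limit point `ν̄ < ν i` of `S i` an index
`g i ν̄` satisfying the coherence conditions (H3)–(H6). -/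
structure CoherentClubSystem (I : Type) where
  nu : I → Ordinal.{0}
  S : I → Set Ordinal.{0}
  b : I → Cardinal.{0}
  g : I → Ordinal.{0} → I
  nu_isLimit : ∀ i, Order.IsSuccLimit (nu i)
  b_infinite : ∀ i, ℵ₀ ≤ b i
  H1 : ∀ i, IsClubIn (S i) (nu i)
  H2 : ∀ i, otype (S i) ≤ Ordinal.lift.{1} (Order.succ (b i)).ord
  H3 : ∀ i ν', IsLimitPt (S i) ν' → ν' < nu i → nu (g i ν') = ν'
  H4 : ∀ i ν', IsLimitPt (S i) ν' → ν' < nu i → S i ∩ Set.Iio ν' ⊆ S (g i ν')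
  H5 : ∀ i ν', IsLimitPt (S i) ν' → ν' < nu i → b (g i ν') = b i
  H6 : ∀ i ν' ν'', IsLimitPt (S i) ν' → IsLimitPt (S i) ν'' → ν' < ν'' → ν'' < nu i →
    g (g i ν'') ν' = g i ν'

/-- `C` is the coherent union associated to the system: for every index `i`,
`C i = S i ∪ ⋃ {C (g i ν̄) : ν̄ a limit point of S i below ν i}`. -/
def CoherentClubSystem.IsCoherentUnion {I : Type} (sys : CoherentClubSystem I)
    (C : I → Set Ordinal.{0}) : Prop :=
  ∀ i, C i = sys.S i ∪
    ⋃ ν' ∈ {ν' | IsLimitPt (sys.S i) ν' ∧ ν' < sys.nu i}, C (sys.g i ν')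

/-! By well-founded induction on `ν i`. For every limit point `ν̄ < ν i` of `S i` one has
`C (g i ν̄) = ν̄ ∩ C i`: (H4) places the `S`-part of `ν̄ ∩ C i` in `S (g i ν̄)`, and by (H6) a piece
`C (g i ν')` of `C i` is, for `ν' < ν̄`, a piece of `C (g i ν̄)`, while for `ν' > ν̄` the induction
hypothesis at `g i ν'` gives `ν̄ ∩ C (g i ν') = C (g i ν̄)`. This settles a limit point `ξ`
of `C i` that is also a limit point of `S i`. Otherwise `S i ∩ ξ` is bounded by some `σ < ξ`, so the
points of `C i` in `(σ, ξ)` lie in a piece `C (g i ν̄)` with `ξ < ν̄`; as that piece is `ν̄ ∩ C i`,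
`ξ` is a limit point of it and the induction hypothesis at `g i ν̄` applies. -/

namespace IsLimitPt

variable {C D : Set Ordinal.{0}} {ξ : Ordinal.{0}}

theorem exists_mem_Ioo (h : IsLimitPt C ξ) {α : Ordinal.{0}} (hα : α < ξ) :
    ∃ β ∈ C, β ∈ Set.Ioo α ξ := by
  obtain ⟨β, ⟨hβC, hβξ⟩, hαβ⟩ := exists_lt_of_lt_csSup' (h.2 ▸ hα)
  exact ⟨β, hβC, hαβ, hβξ⟩

theorem mono (h : IsLimitPt C ξ) (hsub : C ∩ Set.Iio ξ ⊆ D) : IsLimitPt D ξ := by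
  refine ⟨h.1, le_antisymm ?_ (csSup_le' fun _ hx => hx.2.le)⟩
  calc ξ = sSup (C ∩ Set.Iio ξ) := h.2
    _ ≤ sSup (D ∩ Set.Iio ξ) :=
      csSup_le_csSup' ⟨ξ, fun _ hx => hx.2.le⟩ fun _ hx => ⟨hsub hx, hx.2⟩

theorem le_sSup_inter_Iio (h : IsLimitPt C ξ) {η : Ordinal.{0}} (hξη : ξ ≤ η) :
    ξ ≤ sSup (C ∩ Set.Iio η) :=
  h.2.trans_le <| csSup_le_csSup' ⟨η, fun _ hx => hx.2.le⟩
    fun _ hx => ⟨hx.1, hx.2.trans_le hξη⟩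

end IsLimitPt

theorem sSup_inter_Iio_lt_of_not_isLimitPt {S : Set Ordinal.{0}} {ξ : Ordinal.{0}}
    (hξ : 0 < ξ) (h : ¬IsLimitPt S ξ) : sSup (S ∩ Set.Iio ξ) < ξ :=
  (csSup_le' fun _ hx => hx.2.le).lt_of_ne fun heq => h ⟨hξ, heq.symm⟩

namespace CoherentClubSystem

variable {I : Type} {sys : CoherentClubSystem I} {C : I → Set Ordinal.{0}}

theorem isLimitPt_S_g {i : I} {ν' ν'' : Ordinal.{0}} (h' : IsLimitPt (sys.S i) ν')
    (h'' : IsLimitPt (sys.S i) ν'') (hlt : ν' < ν'') (hν'' : ν'' < sys.nu i) :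
    IsLimitPt (sys.S (sys.g i ν'')) ν' :=
  h'.mono fun _ hx => sys.H4 i ν'' h'' hν'' ⟨hx.1, hx.2.trans hlt⟩

theorem nu_g_lt {i : I} {ν' : Ordinal.{0}} (hlim : IsLimitPt (sys.S i) ν')
    (hlt : ν' < sys.nu i) : sys.nu (sys.g i ν') < sys.nu i :=
  (sys.H3 i ν' hlim hlt).trans_lt hlt

namespace IsCoherentUnion

theorem mem_iff (hC : sys.IsCoherentUnion C) {i : I} {x : Ordinal.{0}} :
    x ∈ C i ↔ x ∈ sys.S i ∨
      ∃ ν', (IsLimitPt (sys.S i) ν' ∧ ν' < sys.nu i) ∧ x ∈ C (sys.g i ν') := by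
  rw [hC i]
  simp only [Set.mem_union, Set.mem_iUnion, exists_prop]
  rfl

theorem subset_Iio_nu (hC : sys.IsCoherentUnion C) (i : I) : C i ⊆ Set.Iio (sys.nu i) := by
  induction i using (InvImage.wf sys.nu wellFounded_lt).induction with
  | _ i IH =>
    intro x hx
    rcases hC.mem_iff.1 hx with hS | ⟨ν', ⟨hlim, hlt⟩, hx⟩
    · exact (sys.H1 i).1 hS
    · exact (IH _ (nu_g_lt hlim hlt) hx).trans (nu_g_lt hlim hlt)

variable (hC : sys.IsCoherentUnion C)
include hC

theorem g_subset {i : I} {ν' : Ordinal.{0}} (hlim : IsLimitPt (sys.S i) ν')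
    (hlt : ν' < sys.nu i) : C (sys.g i ν') ⊆ C i :=
  fun _ hx => hC.mem_iff.2 <| Or.inr ⟨ν', ⟨hlim, hlt⟩, hx⟩

theorem g_eq_Iio_inter (i : I) {ν' : Ordinal.{0}} (hlim : IsLimitPt (sys.S i) ν')
    (hlt : ν' < sys.nu i) : C (sys.g i ν') = Set.Iio ν' ∩ C i := by
  induction i using (InvImage.wf sys.nu wellFounded_lt).induction generalizing ν' with
  | _ i IH =>
    have hnu : sys.nu (sys.g i ν') = ν' := sys.H3 i ν' hlim hlt
    refine Set.Subset.antisymm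
      (fun x hx => ⟨hnu ▸ hC.subset_Iio_nu _ hx, hC.g_subset hlim hlt hx⟩) ?_
    rintro x ⟨hxν', hx⟩
    rcases hC.mem_iff.1 hx with hS | ⟨ν'', ⟨hlim'', hlt''⟩, hx⟩
    · exact hC.mem_iff.2 <| Or.inl <| sys.H4 i ν' hlim hlt ⟨hS, hxν'⟩
    rcases lt_trichotomy ν'' ν' with h | rfl | h
    · rw [← sys.H6 i ν'' ν' hlim'' hlim h hlt] at hx
      exact hC.g_subset (isLimitPt_S_g hlim'' hlim h hlt) (h.trans_eq hnu.symm) hx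
    · exact hx
    · have hIH := IH _ (nu_g_lt hlim'' hlt'') (isLimitPt_S_g hlim hlim'' h hlt'')
        (h.trans_eq (sys.H3 i ν'' hlim'' hlt'').symm)
      rw [sys.H6 i ν' ν'' hlim hlim'' h hlt''] at hIH
      exact hIH ▸ ⟨hxν', hx⟩

theorem exists_isLimitPt_gt {i : I} {ξ : Ordinal.{0}} (hξ : IsLimitPt (C i) ξ)
    (hS : ¬IsLimitPt (sys.S i) ξ) : ∃ ν', IsLimitPt (sys.S i) ν' ∧ ν' < sys.nu i ∧ ξ < ν' := by
  have hσ := sSup_inter_Iio_lt_of_not_isLimitPt hξ.1 hS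
  obtain ⟨α, hαC, hσα, hαξ⟩ := hξ.exists_mem_Ioo hσ
  have hαS : α ∉ sys.S i := fun hαS =>
    hσα.not_ge <| le_csSup ⟨ξ, fun _ hx => hx.2.le⟩ ⟨hαS, hαξ⟩
  obtain ⟨ν', ⟨hlim, hlt⟩, hα⟩ := (hC.mem_iff.1 hαC).resolve_left hαS
  have hαν' : α < ν' := sys.H3 i ν' hlim hlt ▸ hC.subset_Iio_nu _ hα
  refine ⟨ν', hlim, hlt, lt_of_not_ge fun hν'ξ => ?_⟩
  exact (hlim.le_sSup_inter_Iio hν'ξ).not_gt (hσα.trans hαν')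

end IsCoherentUnion

end CoherentClubSystem

/-- (Lemma 1.21(c)) The coherent union coheres at every limit point:
if `ξ < ν i` is a limit point of `C i`, then there is an index `j` with `ν j = ξ`
and `C j = ξ ∩ C i`. -/
theorem coherentUnion_full_coherence {I : Type} (sys : CoherentClubSystem I)
    (C : I → Set Ordinal.{0}) (hC : sys.IsCoherentUnion C) :
    ∀ i ξ, IsLimitPt (C i) ξ → ξ < sys.nu i →
      ∃ j, sys.nu j = ξ ∧ C j = Set.Iio ξ ∩ C i := by
  intro i
  induction i using (InvImage.wf sys.nu wellFounded_lt).induction with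
  | _ i IH =>
  intro ξ hξ hlt
  by_cases hS : IsLimitPt (sys.S i) ξ
  · exact ⟨sys.g i ξ, sys.H3 i ξ hS hlt, hC.g_eq_Iio_inter i hS hlt⟩
  obtain ⟨ν', hlim, hlt', hξν'⟩ := hC.exists_isLimitPt_gt hξ hS
  have hCg := hC.g_eq_Iio_inter i hlim hlt'
  have hξg : IsLimitPt (C (sys.g i ν')) ξ :=
    hξ.mono fun _ hx => hCg ▸ ⟨hx.2.trans hξν', hx.1⟩
  obtain ⟨j, hj, hCj⟩ := IH _ (CoherentClubSystem.nu_g_lt hlim hlt') ξ hξg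
    (hξν'.trans_eq (sys.H3 i ν' hlim hlt').symm)
  refine ⟨j, hj, ?_⟩
  rw [hCj, hCg, ← Set.inter_assoc, Set.Iio_inter_Iio, min_eq_left hξν'.le]
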